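/- Let (X_t) be adapted with E[X_t|F_{t−1}] = μ ∈ ℝ^d, E[‖X_t‖²|F_{t−1}] ≤ v' < ∞, and let (λ_t) be positive predictable scalars. Then for each fixed θ ∈ ℝ^d, the process S_t(θ) = Π_{i≤t} exp{ λ_i⟨θ, X_i − μ⟩ − (λ_i²/2)⟨θ, X_i − μ⟩² − (λ_i²/3)‖θ‖²·v' } is a nonnegative supermartingale. -/

import Mathlib

open MeasureTheory ProbabilityTheory Real
open scoped RealInnerProductSpace

/-!
Put `Y = ⟪θ, X i - μ⟫` and `a = ‖θ‖² v'`. Given `ℱ i`, `Y` has mean `0` and, by Cauchy–Schwarz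
and the conditional variance bound, second moment at most `a`. Delyon's inequality
`exp (x - x²/2) ≤ 1 + x + x²/3` at `x = λ Y` bounds the `i`-th factor by
`e^{-λ²a/3} (1 + λY + λ²Y²/3)`, whose conditional expectation is at most
`e^{-λ²a/3} (1 + λ²a/3) ≤ 1`. A product of nonnegative bounded factors with conditional mean at
most `1` is a supermartingale.

Delyon's inequality holds because `(1 + x + x²/3) e^{x²/2 - x}` has derivative
`x ((x + 1)² + 1) e^{x²/2 - x} / 3`, so it is minimal at `x = 0`, where it equals `1`.
-/

lemma hasDerivAt_delyon (x : ℝ) :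
    HasDerivAt (fun y => (1 + y + y ^ 2 / 3) * exp (y ^ 2 / 2 - y))
      (x * ((x + 1) ^ 2 + 1) / 3 * exp (x ^ 2 / 2 - x)) x := by
  have hq : HasDerivAt (fun y : ℝ => 1 + y + y ^ 2 / 3) (1 + 2 * x / 3) x :=
    (((hasDerivAt_id x).const_add 1).add ((hasDerivAt_pow 2 x).div_const 3)).congr_deriv
      (by norm_num)
  have he : HasDerivAt (fun y : ℝ => y ^ 2 / 2 - y) (x - 1) x :=
    (((hasDerivAt_pow 2 x).div_const 2).sub (hasDerivAt_id x)).congr_deriv (by norm_num)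
  exact (hq.mul he.exp).congr_deriv (by ring)

theorem exp_sub_sq_div_two_le (x : ℝ) : exp (x - x ^ 2 / 2) ≤ 1 + x + x ^ 2 / 3 := by
  set h : ℝ → ℝ := fun y => (1 + y + y ^ 2 / 3) * exp (y ^ 2 / 2 - y)
  have hcont : ContinuousOn h Set.univ := continuous_iff_continuousAt.2 (fun y =>
    (hasDerivAt_delyon y).continuousAt) |>.continuousOn
  have h_one_le : 1 ≤ h x := by
    have h0 : h 0 = 1 := by simp [h]
    rcases le_total 0 x with hx | hx
    · refine h0 ▸ monotoneOn_of_hasDerivWithinAt_nonneg (convex_Ici 0) (hcont.mono (by simp))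
        (fun y _ => (hasDerivAt_delyon y).hasDerivWithinAt) (fun y hy => ?_)
        Set.self_mem_Ici hx hx
      rw [interior_Ici] at hy
      have : 0 ≤ y := le_of_lt hy
      positivity
    · refine h0 ▸ antitoneOn_of_hasDerivWithinAt_nonpos (convex_Iic 0) (hcont.mono (by simp))
        (fun y _ => (hasDerivAt_delyon y).hasDerivWithinAt) (fun y hy => ?_)
        hx Set.self_mem_Iic hx
      rw [interior_Iic] at hy
      exact mul_nonpos_of_nonpos_of_nonneg
        (div_nonpos_of_nonpos_of_nonneg (mul_nonpos_of_nonpos_of_nonneg hy.le (by positivity))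
          (by norm_num)) (exp_pos _).le
  calc exp (x - x ^ 2 / 2) ≤ exp (x - x ^ 2 / 2) * h x :=
        le_mul_of_one_le_right (exp_pos _).le h_one_le
    _ = 1 + x + x ^ 2 / 3 := by
      rw [mul_left_comm, ← exp_add, show x - x ^ 2 / 2 + (x ^ 2 / 2 - x) = 0 by ring, exp_zero,
        mul_one]

lemma add_one_mul_exp_neg_le_one (t : ℝ) : (t + 1) * exp (-t) ≤ 1 := by
  calc (t + 1) * exp (-t) ≤ exp t * exp (-t) :=
        mul_le_mul_of_nonneg_right (add_one_le_exp t) (exp_pos _).le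
    _ = 1 := by rw [← exp_add, add_neg_cancel, exp_zero]

lemma exp_neg_sq_mul_le_one {b : ℝ} (hb : 0 ≤ b) (x : ℝ) : exp (-(x ^ 2 * b)) ≤ 1 :=
  exp_le_one_iff.2 (neg_nonpos.2 (by positivity))

lemma sq_mul_exp_neg_sq_mul_le {b : ℝ} (hb : 0 < b) (x : ℝ) :
    x ^ 2 * exp (-(x ^ 2 * b)) ≤ 1 / b := by
  have := add_one_mul_exp_neg_le_one (x ^ 2 * b)
  rw [le_div_iff₀ hb]
  nlinarith [exp_pos (-(x ^ 2 * b))]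

lemma abs_mul_exp_neg_sq_mul_le {b : ℝ} (hb : 0 < b) (x : ℝ) :
    |x| * exp (-(x ^ 2 * b)) ≤ (1 + 1 / b) / 2 := by
  have hx : |x| ≤ (1 + x ^ 2) / 2 := by nlinarith [sq_abs x, sq_nonneg (|x| - 1)]
  calc |x| * exp (-(x ^ 2 * b)) ≤ (1 + x ^ 2) / 2 * exp (-(x ^ 2 * b)) :=
        mul_le_mul_of_nonneg_right hx (exp_pos _).le
    _ = (exp (-(x ^ 2 * b)) + x ^ 2 * exp (-(x ^ 2 * b))) / 2 := by ring
    _ ≤ (1 + 1 / b) / 2 := by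
        linarith [exp_neg_sq_mul_le_one hb.le x, sq_mul_exp_neg_sq_mul_le hb x]

lemma mul_sub_sq_div_two_sub_le_half (l y : ℝ) {c : ℝ} (hc : 0 ≤ c) :
    l * y - l ^ 2 / 2 * y ^ 2 - l ^ 2 / 3 * c ≤ 1 / 2 := by
  nlinarith [sq_nonneg (l * y - 1), mul_nonneg (sq_nonneg l) hc]

section

variable {Ω : Type*} {m m0 : MeasurableSpace Ω} {P : Measure[m0] Ω}

lemma nonneg_of_condExp_le_const [NeZero P] {f : Ω → ℝ} {a : ℝ} (hf : 0 ≤ᵐ[P] f)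
    (h : P[f|m] ≤ᵐ[P] fun _ => a) : 0 ≤ a := by
  obtain ⟨ω, h0, h1⟩ := ((condExp_nonneg hf).and h).exists
  exact h0.trans h1

lemma ae_eq_zero_of_condExp_sq_nonpos (hm : m ≤ m0) [IsFiniteMeasure P] {Y : Ω → ℝ}
    (hY : Integrable (fun ω => Y ω ^ 2) P) (h : P[fun ω => Y ω ^ 2|m] ≤ᵐ[P] 0) :
    Y =ᵐ[P] 0 := by
  have hint : ∫ ω, Y ω ^ 2 ∂P = 0 := by
    refine le_antisymm ?_ (integral_nonneg fun ω => sq_nonneg _)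
    rw [← integral_condExp hm]
    exact integral_nonpos_of_ae h
  filter_upwards [(integral_eq_zero_iff_of_nonneg (fun ω => sq_nonneg _) hY).1 hint]
    with ω hω using pow_eq_zero_iff two_ne_zero |>.1 hω

variable {E : Type*} [NormedAddCommGroup E] [InnerProductSpace ℝ E] [CompleteSpace E]

lemma condExp_inner_ae_eq_of_condExp_ae_eq {X : Ω → E} {c : E} (hX : Integrable X P)
    (hmean : P[X|m] =ᵐ[P] fun _ => c) (θ : E) :
    P[fun ω => ⟪θ, X ω⟫|m] =ᵐ[P] fun _ => ⟪θ, c⟫ := by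
  filter_upwards [((innerSL ℝ θ).comp_condExp_comm (m := m) hX).symm, hmean] with ω h1 h2
  exact h1.trans (congrArg (innerSL ℝ θ) h2)

lemma condExp_inner_sub_ae_eq_zero [IsFiniteMeasure P] {X : Ω → E} {c : E}
    (hm : m ≤ m0) (hX : Integrable X P) (hmean : P[X|m] =ᵐ[P] fun _ => c) (θ : E) :
    P[fun ω => ⟪θ, X ω - c⟫|m] =ᵐ[P] 0 := by
  simp only [inner_sub_right]
  filter_upwards [condExp_sub (m := m) (hX.const_inner θ) (integrable_const ⟪θ, c⟫),
    condExp_inner_ae_eq_of_condExp_ae_eq hX hmean θ] with ω h1 h2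
  change P[(fun ω => ⟪θ, X ω⟫) - fun _ => ⟪θ, c⟫|m] ω = 0
  rw [h1, Pi.sub_apply, h2, condExp_const hm, sub_self]

lemma condExp_inner_sub_sq_le [IsFiniteMeasure P] {X : Ω → E} {c : E} {v : ℝ}
    (hm : m ≤ m0) (hX : MemLp X 2 P) (hmean : P[X|m] =ᵐ[P] fun _ => c)
    (hsq : P[fun ω => ‖X ω‖ ^ 2|m] ≤ᵐ[P] fun _ => v) (θ : E) :
    P[fun ω => ⟪θ, X ω - c⟫ ^ 2|m] ≤ᵐ[P] fun _ => ‖θ‖ ^ 2 * v := by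
  set Z : Ω → ℝ := fun ω => ⟪θ, X ω⟫
  have hZ : MemLp Z 2 P := hX.const_inner θ
  have hZ_mean := condExp_inner_ae_eq_of_condExp_ae_eq (hX.integrable one_le_two) hmean θ
  calc P[fun ω => ⟪θ, X ω - c⟫ ^ 2|m]
      =ᵐ[P] Var[Z; P | m] := condExp_congr_ae <| by
        filter_upwards [hZ_mean] with ω hω
        simp [Z, hω, inner_sub_right]
    _ ≤ᵐ[P] P[fun ω => Z ω ^ 2|m] := condVar_ae_le_condExp_sq hm hZ
    _ ≤ᵐ[P] P[fun ω => ‖θ‖ ^ 2 * ‖X ω‖ ^ 2|m] :=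
        condExp_mono hZ.integrable_sq (hX.norm.integrable_sq.const_mul _) <|
          ae_of_all _ fun ω => by
            show Z ω ^ 2 ≤ ‖θ‖ ^ 2 * ‖X ω‖ ^ 2
            rw [← mul_pow, ← sq_abs]
            exact pow_le_pow_left₀ (abs_nonneg _) (abs_real_inner_le_norm θ (X ω)) 2
    _ =ᵐ[P] ‖θ‖ ^ 2 • P[fun ω => ‖X ω‖ ^ 2|m] :=
        condExp_smul (‖θ‖ ^ 2) (fun ω => ‖X ω‖ ^ 2) m
    _ ≤ᵐ[P] fun _ => ‖θ‖ ^ 2 * v := by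
        filter_upwards [hsq] with ω hω
        exact mul_le_mul_of_nonneg_left hω (sq_nonneg _)

lemma condExp_le_of_le_quadratic (hm : m ≤ m0) [IsFiniteMeasure P] {f φ B C Y : Ω → ℝ}
    {β γ : ℝ} (hf : Integrable f P) (hφm : StronglyMeasurable[m] φ) (hφi : Integrable φ P)
    (hBm : StronglyMeasurable[m] B) (hBβ : ∀ ω, ‖B ω‖ ≤ β)
    (hCm : StronglyMeasurable[m] C) (hCγ : ∀ ω, ‖C ω‖ ≤ γ) (hY : MemLp Y 2 P)
    (hfq : ∀ ω, f ω ≤ φ ω + B ω * Y ω + C ω * Y ω ^ 2) :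
    P[f|m] ≤ᵐ[P] φ + B * P[Y|m] + C * P[fun ω => Y ω ^ 2|m] := by
  have hY1 : Integrable Y P := hY.integrable one_le_two
  have hY2 : Integrable (fun ω => Y ω ^ 2) P := hY.integrable_sq
  have hBY : Integrable (B * Y) P :=
    hY1.bdd_mul (hBm.mono hm).aestronglyMeasurable (ae_of_all _ hBβ)
  have hCY : Integrable (C * fun ω => Y ω ^ 2) P :=
    hY2.bdd_mul (hCm.mono hm).aestronglyMeasurable (ae_of_all _ hCγ)
  calc P[f|m] ≤ᵐ[P] P[φ + B * Y + C * fun ω => Y ω ^ 2|m] :=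
        condExp_mono hf ((hφi.add hBY).add hCY) (ae_of_all _ hfq)
    _ =ᵐ[P] φ + B * P[Y|m] + C * P[fun ω => Y ω ^ 2|m] := by
        filter_upwards [condExp_add (m := m) (hφi.add hBY) hCY, condExp_add (m := m) hφi hBY,
          condExp_mul_of_stronglyMeasurable_left hBm hBY hY1,
          condExp_mul_of_stronglyMeasurable_left hCm hCY hY2] with ω h1 h2 h3 h4
        simp only [Pi.add_apply] at h1 h2 ⊢
        rw [h1, h2, h3, h4, condExp_of_stronglyMeasurable hm hφm hφi]

theorem condExp_exp_delyon_le_one_of_pos (hm : m ≤ m0) [IsProbabilityMeasure P]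
    {Y l : Ω → ℝ} {a : ℝ} (ha : 0 < a) (hY : MemLp Y 2 P) (hl : Measurable[m] l)
    (hmean : P[Y|m] =ᵐ[P] 0) (hvar : P[fun ω => Y ω ^ 2|m] ≤ᵐ[P] fun _ => a) :
    P[fun ω => exp (l ω * Y ω - l ω ^ 2 / 2 * Y ω ^ 2 - l ω ^ 2 / 3 * a)|m] ≤ᵐ[P] 1 := by
  have hb : 0 < a / 3 := by positivity
  -- `l` need not be bounded, so `l Y` need not be integrable; after the factor `φ` the
  -- coefficients `l φ` and `l² φ / 3` of the quadratic bound are bounded.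
  set φ : Ω → ℝ := fun ω => exp (-(l ω ^ 2 * (a / 3)))
  set C : Ω → ℝ := fun ω => l ω ^ 2 * φ ω / 3
  have hC_nonneg : ∀ ω, 0 ≤ C ω := fun ω => by positivity
  have hf : Integrable (fun ω => exp (l ω * Y ω - l ω ^ 2 / 2 * Y ω ^ 2 - l ω ^ 2 / 3 * a)) P := by
    have := hY.1.aemeasurable
    have := hl.mono hm le_rfl
    refine .of_bound (by fun_prop : AEMeasurable _ P).aestronglyMeasurable (exp (1 / 2))
      (ae_of_all _ fun ω => ?_)
    rw [norm_of_nonneg (exp_pos _).le]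
    exact exp_le_exp.2 (mul_sub_sq_div_two_sub_le_half _ _ ha.le)
  have hφm : StronglyMeasurable[m] φ := by fun_prop
  have hφi : Integrable φ P := .of_bound (hφm.mono hm).aestronglyMeasurable 1
    (ae_of_all _ fun ω => (norm_of_nonneg (exp_pos _).le).trans_le (exp_neg_sq_mul_le_one hb.le _))
  have hB_bdd : ∀ ω, ‖l ω * φ ω‖ ≤ (1 + 1 / (a / 3)) / 2 := fun ω => by
    rw [norm_mul, norm_of_nonneg (exp_pos _).le]
    exact abs_mul_exp_neg_sq_mul_le hb _
  have hC_bdd : ∀ ω, ‖C ω‖ ≤ 1 / (a / 3) / 3 := fun ω =>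
    (norm_of_nonneg (hC_nonneg ω)).trans_le <|
      div_le_div_of_nonneg_right (sq_mul_exp_neg_sq_mul_le hb _) zero_le_three
  have hpt : ∀ ω, exp (l ω * Y ω - l ω ^ 2 / 2 * Y ω ^ 2 - l ω ^ 2 / 3 * a)
      ≤ φ ω + l ω * φ ω * Y ω + C ω * Y ω ^ 2 := fun ω => by
    calc exp (l ω * Y ω - l ω ^ 2 / 2 * Y ω ^ 2 - l ω ^ 2 / 3 * a)
        = exp (l ω * Y ω - (l ω * Y ω) ^ 2 / 2) * φ ω := by rw [← exp_add]; ring_nf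
      _ ≤ (1 + l ω * Y ω + (l ω * Y ω) ^ 2 / 3) * φ ω :=
        mul_le_mul_of_nonneg_right (exp_sub_sq_div_two_le _) (exp_pos _).le
      _ = φ ω + l ω * φ ω * Y ω + C ω * Y ω ^ 2 := by ring
  have hquad := condExp_le_of_le_quadratic hm hf hφm hφi (by fun_prop) hB_bdd (by fun_prop)
    hC_bdd hY hpt
  filter_upwards [hquad, hmean, hvar] with ω hω h1 h2
  refine hω.trans ?_
  simp only [Pi.add_apply, Pi.mul_apply, Pi.zero_apply, Pi.one_apply] at h1 ⊢
  calc φ ω + l ω * φ ω * P[Y|m] ω + C ω * P[fun ω => Y ω ^ 2|m] ω ≤ φ ω + C ω * a := by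
        rw [h1, mul_zero, add_zero]; linarith [mul_le_mul_of_nonneg_left h2 (hC_nonneg ω)]
    _ = (l ω ^ 2 * (a / 3) + 1) * exp (-(l ω ^ 2 * (a / 3))) := by simp only [C, φ]; ring
    _ ≤ 1 := add_one_mul_exp_neg_le_one _

theorem condExp_exp_delyon_le_one (hm : m ≤ m0) [IsProbabilityMeasure P]
    {Y l : Ω → ℝ} {a : ℝ} (hY : MemLp Y 2 P) (hl : Measurable[m] l)
    (hmean : P[Y|m] =ᵐ[P] 0) (hvar : P[fun ω => Y ω ^ 2|m] ≤ᵐ[P] fun _ => a) :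
    P[fun ω => exp (l ω * Y ω - l ω ^ 2 / 2 * Y ω ^ 2 - l ω ^ 2 / 3 * a)|m] ≤ᵐ[P] 1 := by
  rcases (nonneg_of_condExp_le_const (ae_of_all _ fun ω => sq_nonneg (Y ω)) hvar).eq_or_lt
    with rfl | ha
  · have hY0 : Y =ᵐ[P] 0 := ae_eq_zero_of_condExp_sq_nonpos hm hY.integrable_sq hvar
    have hexp : (fun ω => exp (l ω * Y ω - l ω ^ 2 / 2 * Y ω ^ 2 - l ω ^ 2 / 3 * 0))
        =ᵐ[P] fun _ => (1 : ℝ) := by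
      filter_upwards [hY0] with ω hω
      simp [hω]
    refine (condExp_congr_ae hexp).trans_le ?_
    rw [condExp_const hm]
    exact ae_of_all _ fun _ => le_rfl
  · exact condExp_exp_delyon_le_one_of_pos hm ha hY hl hmean hvar

theorem supermartingale_prod_range [IsFiniteMeasure P] {ℱ : Filtration ℕ m0}
    {ξ : ℕ → Ω → ℝ} {C : ℝ} (hξm : ∀ i, StronglyMeasurable[ℱ (i + 1)] (ξ i))
    (hξ0 : ∀ i ω, 0 ≤ ξ i ω) (hξC : ∀ i ω, ξ i ω ≤ C) (hξ1 : ∀ i, P[ξ i|ℱ i] ≤ᵐ[P] 1) :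
    Supermartingale (fun t ω => ∏ i ∈ Finset.range t, ξ i ω) ℱ P := by
  set S : ℕ → Ω → ℝ := fun t ω => ∏ i ∈ Finset.range t, ξ i ω
  have hS_succ : ∀ t, S (t + 1) = S t * ξ t := fun t => funext fun ω => Finset.prod_range_succ _ _
  have hS0 : ∀ t ω, 0 ≤ S t ω := fun t ω => Finset.prod_nonneg fun i _ => hξ0 i ω
  have hSm : StronglyAdapted ℱ S := fun t =>
    Finset.stronglyMeasurable_fun_prod _ fun i hi => (hξm i).mono (ℱ.mono (Finset.mem_range.1 hi))
  have hξi : ∀ i, Integrable (ξ i) P := fun i =>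
    .of_bound ((hξm i).mono (ℱ.le _)).aestronglyMeasurable C
      (ae_of_all _ fun ω => (norm_of_nonneg (hξ0 i ω)).trans_le (hξC i ω))
  have hSi : ∀ t, Integrable (S t) P := by
    intro t
    induction t with
    | zero => simp [S]
    | succ t ih =>
      rw [hS_succ]
      exact ih.mul_bdd ((hξm t).mono (ℱ.le _)).aestronglyMeasurable
        (ae_of_all _ fun ω => (norm_of_nonneg (hξ0 t ω)).trans_le (hξC t ω))
  refine supermartingale_nat hSm hSi fun t => ?_
  rw [hS_succ]
  filter_upwards [condExp_mul_of_stronglyMeasurable_left (hSm t) (hS_succ t ▸ hSi (t + 1)) (hξi t),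
    hξ1 t] with ω h1 h2
  rw [h1]
  exact mul_le_of_le_one_right (hS0 t ω) h2

end

theorem delyon_supermartingale {d : ℕ} {Ω : Type*} {m0 : MeasurableSpace Ω}
    (P : Measure Ω) [IsProbabilityMeasure P]
    (ℱ : Filtration ℕ m0)
    -- `X i` is the (i+1)-st observation, measurable at time i+1
    (X : ℕ → Ω → EuclideanSpace ℝ (Fin d))
    (hadap : ∀ i, StronglyMeasurable[ℱ (i + 1)] (X i))
    (μ : EuclideanSpace ℝ (Fin d))
    (hcmean : ∀ i, P[X i | ℱ i] =ᵐ[P] fun _ => μ)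
    (v' : ℝ)
    (hsqint : ∀ i, Integrable (fun ω => ‖X i ω‖ ^ 2) P)
    (hcsq : ∀ i, P[fun ω => ‖X i ω‖ ^ 2 | ℱ i] ≤ᵐ[P] fun _ => v')
    -- positive predictable scalars
    (lam : ℕ → Ω → ℝ)
    (hlammeas : ∀ i, Measurable[ℱ i] (lam i))
    (θ : EuclideanSpace ℝ (Fin d)) :
    Supermartingale
      (fun t ω => ∏ i ∈ Finset.range t,
        Real.exp (lam i ω * ⟪θ, X i ω - μ⟫
          - (lam i ω) ^ 2 / 2 * ⟪θ, X i ω - μ⟫ ^ 2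
          - (lam i ω) ^ 2 / 3 * ‖θ‖ ^ 2 * v')) ℱ P ∧
    ∀ t ω, 0 ≤ ∏ i ∈ Finset.range t,
        Real.exp (lam i ω * ⟪θ, X i ω - μ⟫
          - (lam i ω) ^ 2 / 2 * ⟪θ, X i ω - μ⟫ ^ 2
          - (lam i ω) ^ 2 / 3 * ‖θ‖ ^ 2 * v') := by
  have hX : ∀ i, MemLp (X i) 2 P := fun i =>
    (memLp_two_iff_integrable_sq_norm ((hadap i).mono (ℱ.le _)).aestronglyMeasurable).2 (hsqint i)
  have hv' : 0 ≤ v' := nonneg_of_condExp_le_const (ae_of_all _ fun ω => sq_nonneg _) (hcsq 0)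
  refine ⟨supermartingale_prod_range (C := exp (1 / 2)) (fun i => ?_) (fun i ω => (exp_pos _).le)
    (fun i ω => ?_) (fun i => ?_), fun t ω => Finset.prod_nonneg fun i _ => (exp_pos _).le⟩
  · have := (hadap i).measurable
    have := (hlammeas i).mono (ℱ.mono i.le_succ) le_rfl
    exact Measurable.stronglyMeasurable (by fun_prop)
  · simpa only [mul_assoc] using
      exp_le_exp.2 (mul_sub_sq_div_two_sub_le_half (lam i ω) ⟪θ, X i ω - μ⟫ (by positivity))
  · simpa only [mul_assoc] using condExp_exp_delyon_le_one (ℱ.le i) (Y := fun ω => ⟪θ, X i ω - μ⟫)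
      (((hX i).sub (memLp_const μ)).const_inner θ) (hlammeas i)
      (condExp_inner_sub_ae_eq_zero (ℱ.le i) ((hX i).integrable one_le_two) (hcmean i) θ)
      (condExp_inner_sub_sq_le (ℱ.le i) (hX i) (hcmean i) (hcsq i) θ)
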